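/- Let (H,α) be a monoidal Hom-bialgebra over a commutative ring k and let (M,μ) and (N,ν) be right-right Yetter-Drinfel'd (H,α)-Hom-modules. Then M⊗N, with bijection μ⊗ν, diagonal right action (m⊗n)◁h := m◁h₁⊗n◁h₂, and codiagonal right coaction (m⊗n)↦(m₍₀₎⊗n₍₀₎)⊗m₍₁₎n₍₁₎, is again a right-right Yetter-Drinfel'd (H,α)-Hom-module; in particular the twisted Yetter-Drinfel'd condition holds: (m⊗n)₍₀₎◁α⁻¹(h₁)⊗(m⊗n)₍₁₎α⁻¹(h₂)=((m⊗n)◁h₂)₍₀₎⊗α⁻¹(h₁·((m⊗n)◁h₂)₍₁₎). -/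
import Mathlib
set_option maxHeartbeats 1000000


open TensorProduct

noncomputable def tmul2 {k A B C D E F : Type*} [CommRing k]
    [AddCommGroup A] [AddCommGroup B] [AddCommGroup C] [AddCommGroup D]
    [AddCommGroup E] [AddCommGroup F]
    [Module k A] [Module k B] [Module k C] [Module k D] [Module k E] [Module k F]
    (f : A →ₗ[k] C →ₗ[k] E) (g : B →ₗ[k] D →ₗ[k] F) :
    (A ⊗[k] B) →ₗ[k] (C ⊗[k] D) →ₗ[k] (E ⊗[k] F) :=
  TensorProduct.curry
    ((TensorProduct.map (TensorProduct.lift f) (TensorProduct.lift g)) ∘ₗ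
      (TensorProduct.tensorTensorTensorComm k A B C D).toLinearMap)

/-- A monoidal Hom-bialgebra over a commutative ring `k`. -/
structure MonHomBialg (k H : Type*) [CommRing k] [AddCommGroup H] [Module k H] where
  α : H ≃ₗ[k] H
  mul : H →ₗ[k] H →ₗ[k] H
  one : H
  comul : H →ₗ[k] H ⊗[k] H
  counit : H →ₗ[k] k
  alpha_mul : ∀ g h, α (mul g h) = mul (α g) (α h)
  alpha_one : α one = one
  hom_assoc : ∀ g h l, mul (α g) (mul h l) = mul (mul g h) (α l)
  mul_one' : ∀ h, mul h one = α h
  one_mul' : ∀ h, mul one h = α h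
  comul_alpha : ∀ h, comul (α h)
    = TensorProduct.map α.toLinearMap α.toLinearMap (comul h)
  counit_alpha : ∀ h, counit (α h) = counit h
  hom_coassoc : ∀ h,
    (TensorProduct.assoc k H H H) ((TensorProduct.map comul α.symm.toLinearMap) (comul h))
      = (TensorProduct.map α.symm.toLinearMap comul) (comul h)
  counit_comul_left : ∀ h,
    (TensorProduct.lid k H) ((TensorProduct.map counit LinearMap.id) (comul h)) = α.symm h
  counit_comul_right : ∀ h,
    (TensorProduct.rid k H) ((TensorProduct.map LinearMap.id counit) (comul h)) = α.symm h
  comul_mul : ∀ g h, comul (mul g h) = tmul2 mul mul (comul g) (comul h)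
  comul_one : comul one = one ⊗ₜ[k] one
  counit_mul : ∀ g h, counit (mul g h) = counit g * counit h
  counit_one : counit one = 1

/-- A right-right Yetter-Drinfel'd Hom-module over `MonHomBialg`. -/
structure YDmodB {k H : Type*} [CommRing k] [AddCommGroup H] [Module k H]
    (A : MonHomBialg k H) (N : Type*) [AddCommGroup N] [Module k N] where
  ν : N ≃ₗ[k] N
  act : N →ₗ[k] H →ₗ[k] N
  act_assoc : ∀ n g h, act (ν n) (A.mul g h) = act (act n g) (A.α h)
  act_one : ∀ n, act n A.one = ν n
  nu_act : ∀ n h, ν (act n h) = act (ν n) (A.α h)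
  coact : N →ₗ[k] N ⊗[k] H
  coact_coassoc : ∀ n,
    (TensorProduct.map coact A.α.symm.toLinearMap) (coact n)
      = (TensorProduct.assoc k N H H).symm
          ((TensorProduct.map ν.symm.toLinearMap A.comul) (coact n))
  coact_counit : ∀ n,
    (TensorProduct.rid k N) ((TensorProduct.map (LinearMap.id : N →ₗ[k] N) A.counit) (coact n))
      = ν.symm n
  coact_nu : ∀ n, coact (ν n) = TensorProduct.map ν.toLinearMap A.α.toLinearMap (coact n)
  yd : ∀ n h,
    tmul2 (act.compl₂ A.α.symm.toLinearMap) (A.mul.compl₂ A.α.symm.toLinearMap)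
        (coact n) (A.comul h)
      = ((TensorProduct.map (LinearMap.id : N →ₗ[k] N)
            (A.α.symm.toLinearMap ∘ₗ TensorProduct.lift A.mul)) ∘ₗ
          (TensorProduct.leftComm k H N H).toLinearMap)
          ((TensorProduct.map (LinearMap.id : H →ₗ[k] H) (coact ∘ₗ act n)) (A.comul h))

/-- The diagonal right Hom-action on a tensor product: `(m ⊗ n) ◁ h = (m ◁ h₁) ⊗ (n ◁ h₂)`. -/
noncomputable def dAct {k H M N : Type*} [CommRing k] [AddCommGroup H] [Module k H]
    [AddCommGroup M] [Module k M] [AddCommGroup N] [Module k N]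
    (A : MonHomBialg k H)
    (actM : M →ₗ[k] H →ₗ[k] M) (actN : N →ₗ[k] H →ₗ[k] N) :
    (M ⊗[k] N) →ₗ[k] H →ₗ[k] (M ⊗[k] N) :=
  (tmul2 actM actN).compl₂ A.comul

/-- The codiagonal right Hom-coaction on a tensor product:
`(m ⊗ n) ↦ (m₍₀₎ ⊗ n₍₀₎) ⊗ m₍₁₎ n₍₁₎`. -/
noncomputable def dCoact {k H M N : Type*} [CommRing k] [AddCommGroup H] [Module k H]
    [AddCommGroup M] [Module k M] [AddCommGroup N] [Module k N]
    (A : MonHomBialg k H)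
    (cM : M →ₗ[k] M ⊗[k] H) (cN : N →ₗ[k] N ⊗[k] H) :
    (M ⊗[k] N) →ₗ[k] (M ⊗[k] N) ⊗[k] H :=
  (TensorProduct.map (LinearMap.id : M ⊗[k] N →ₗ[k] M ⊗[k] N) (TensorProduct.lift A.mul)) ∘ₗ
    (TensorProduct.tensorTensorTensorComm k M H N H).toLinearMap ∘ₗ
    (TensorProduct.map cM cN)


section Aux

variable {k H : Type*} [CommRing k] [AddCommGroup H] [Module k H]
  (A : MonHomBialg k H)

@[simp] theorem tmul2_tmul {A' B C D E F : Type*}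
    [AddCommGroup A'] [AddCommGroup B] [AddCommGroup C] [AddCommGroup D]
    [AddCommGroup E] [AddCommGroup F]
    [Module k A'] [Module k B] [Module k C] [Module k D] [Module k E] [Module k F]
    (f : A' →ₗ[k] C →ₗ[k] E) (g : B →ₗ[k] D →ₗ[k] F) (a : A') (b : B) (c : C) (d : D) :
    tmul2 f g (a ⊗ₜ b) (c ⊗ₜ d) = f a c ⊗ₜ g b d := rfl

theorem alpha_inv_mul (g h : H) :
    A.α.symm (A.mul g h) = A.mul (A.α.symm g) (A.α.symm h) := by
  apply A.α.injective
  rw [A.alpha_mul]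
  simp

theorem comul_alpha_inv (h : H) :
    A.comul (A.α.symm h) =
      TensorProduct.map A.α.symm.toLinearMap A.α.symm.toLinearMap (A.comul h) := by
  have h1 := A.comul_alpha (A.α.symm h)
  rw [A.α.apply_symm_apply] at h1
  rw [h1, ← LinearMap.comp_apply, ← TensorProduct.map_comp]
  simp [TensorProduct.map_id]

theorem map_id_comp {P Q R S : Type*} [AddCommGroup P] [AddCommGroup Q] [AddCommGroup R]
    [AddCommGroup S] [Module k P] [Module k Q] [Module k R] [Module k S]
    (f : Q →ₗ[k] R) (g : P →ₗ[k] Q) :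
    TensorProduct.map (LinearMap.id : S →ₗ[k] S) (f ∘ₗ g)
      = TensorProduct.map LinearMap.id f ∘ₗ TensorProduct.map LinearMap.id g := by
  rw [← TensorProduct.map_comp, LinearMap.id_comp]

variable {M N : Type*} [AddCommGroup M] [Module k M] [AddCommGroup N] [Module k N]
  (YM : YDmodB A M) (YN : YDmodB A N)

theorem dAct_apply (x : M ⊗[k] N) (h : H) :
    dAct A YM.act YN.act x h = tmul2 YM.act YN.act x (A.comul h) := rfl

/-- The "multiply the H-parts" map. -/
noncomputable def Xi : (M ⊗[k] H) ⊗[k] (N ⊗[k] H) →ₗ[k] (M ⊗[k] N) ⊗[k] H :=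
  (TensorProduct.map (LinearMap.id : M ⊗[k] N →ₗ[k] M ⊗[k] N) (TensorProduct.lift A.mul)) ∘ₗ
    (TensorProduct.tensorTensorTensorComm k M H N H).toLinearMap

@[simp] theorem Xi_tmul (m : M) (a : H) (n : N) (b : H) :
    Xi A ((m ⊗ₜ a) ⊗ₜ (n ⊗ₜ b)) = (m ⊗ₜ n) ⊗ₜ (A.mul a b) := rfl

theorem dCoact_tmul (m : M) (n : N) :
    dCoact A YM.coact YN.coact (m ⊗ₜ n) = Xi A (YM.coact m ⊗ₜ YN.coact n) := rfl

end Aux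
/-- the tensor product of two Yetter-Drinfel'd Hom-modules, with diagonal
action and codiagonal coaction, is again a Yetter-Drinfel'd Hom-module. -/
theorem tensor_yetter_drinfeld {k H : Type*} [CommRing k] [AddCommGroup H] [Module k H]
    (A : MonHomBialg k H) {M N : Type*} [AddCommGroup M] [Module k M]
    [AddCommGroup N] [Module k N]
    (YM : YDmodB A M) (YN : YDmodB A N) :
    ∃ P : YDmodB A (M ⊗[k] N),
      P.ν = TensorProduct.congr YM.ν YN.ν ∧
      P.act = dAct A YM.act YN.act ∧
      P.coact = dCoact A YM.coact YN.coact := by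
  classical
  refine ⟨{ ν := TensorProduct.congr YM.ν YN.ν
            act := dAct A YM.act YN.act
            coact := dCoact A YM.coact YN.coact
            act_assoc := ?_
            act_one := ?_
            nu_act := ?_
            coact_coassoc := ?_
            coact_counit := ?_
            coact_nu := ?_
            yd := ?_ }, rfl, rfl, rfl⟩
  · -- act_assoc
    intro x g h
    induction x using TensorProduct.induction_on with
    | zero => simp
    | add y z hy hz => simp [map_add, hy, hz]
    | tmul m n =>
      rw [dAct_apply, dAct_apply, dAct_apply, congr_tmul, A.comul_mul, A.comul_alpha]
      generalize A.comul g = u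
      generalize A.comul h = v
      induction u using TensorProduct.induction_on with
      | zero => simp
      | add y z hy hz => simp only [map_add, LinearMap.add_apply] at hy hz ⊢; rw [hy, hz]
      | tmul a b =>
        induction v using TensorProduct.induction_on with
        | zero => simp
        | add y z hy hz => simp only [map_add, LinearMap.map_add, LinearMap.add_apply] at hy hz ⊢; rw [hy, hz]
        | tmul c d => simp [YM.act_assoc, YN.act_assoc]
  · -- act_one
    intro x
    induction x using TensorProduct.induction_on with
    | zero => simp
    | add y z hy hz => simp [map_add, hy, hz]
    | tmul m n =>
      rw [dAct_apply, A.comul_one]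
      simp [YM.act_one, YN.act_one]
  · -- nu_act
    intro x h
    induction x using TensorProduct.induction_on with
    | zero => simp
    | add y z hy hz => simp [map_add, hy, hz]
    | tmul m n =>
      rw [dAct_apply, dAct_apply, congr_tmul, A.comul_alpha]
      generalize A.comul h = u
      induction u using TensorProduct.induction_on with
      | zero => simp
      | add y z hy hz => simp only [map_add, LinearMap.map_add, LinearMap.add_apply] at hy hz ⊢; rw [hy, hz]
      | tmul a b => simp [YM.nu_act, YN.nu_act]
  · -- coact_coassoc
    intro x
    induction x using TensorProduct.induction_on with
    | zero => simp
    | add y z hy hz => simp [map_add, hy, hz]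
    | tmul m n =>
      obtain ⟨Sm, hm⟩ := TensorProduct.exists_finset (R := k) (YM.coact m)
      obtain ⟨Sn, hn⟩ := TensorProduct.exists_finset (R := k) (YN.coact n)
      -- Φ : ((M⊗H)⊗H)⊗((N⊗H)⊗H) →ₗ ((M⊗N)⊗H)⊗H
      set Φ : ((M ⊗[k] H) ⊗[k] H) ⊗[k] ((N ⊗[k] H) ⊗[k] H) →ₗ[k]
          ((M ⊗[k] N) ⊗[k] H) ⊗[k] H :=
        (TensorProduct.map (Xi A) (TensorProduct.lift A.mul)) ∘ₗ
          (TensorProduct.tensorTensorTensorComm k (M ⊗[k] H) H (N ⊗[k] H) H).toLinearMap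
        with hΦ
      have claim1 :
          (TensorProduct.map (dCoact A YM.coact YN.coact) A.α.symm.toLinearMap)
              (dCoact A YM.coact YN.coact (m ⊗ₜ n))
            = Φ ((TensorProduct.map YM.coact A.α.symm.toLinearMap) (YM.coact m) ⊗ₜ
                 (TensorProduct.map YN.coact A.α.symm.toLinearMap) (YN.coact n)) := by
        rw [dCoact_tmul]
        conv_lhs => rw [hm, hn]
        conv_rhs => rw [hm, hn]
        simp only [map_sum, sum_tmul, tmul_sum, map_sum, Finset.sum_sigma']
        refine Finset.sum_congr rfl fun pq _ => ?_
        obtain ⟨q, p⟩ := pq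
        simp [hΦ, dCoact_tmul, alpha_inv_mul]
      rw [claim1, YM.coact_coassoc, YN.coact_coassoc]
      conv_lhs => rw [hm, hn]
      conv_rhs => rw [dCoact_tmul, hm, hn]
      simp only [map_sum, sum_tmul, tmul_sum, map_sum, Finset.sum_sigma']
      refine Finset.sum_congr rfl fun pq _ => ?_
      obtain ⟨q, p⟩ := pq
      simp only [map_tmul, Xi_tmul, congr_symm_tmul, A.comul_mul]
      generalize A.comul p.2 = u
      generalize A.comul q.2 = v
      induction u using TensorProduct.induction_on with
      | zero => simp
      | add y z hy hz => simp only [map_add, tmul_add, add_tmul, LinearMap.map_add, LinearMap.add_apply] at hy hz ⊢; rw [hy, hz]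
      | tmul a b =>
        induction v using TensorProduct.induction_on with
        | zero => simp
        | add y z hy hz => simp only [map_add, tmul_add, add_tmul, LinearMap.map_add, LinearMap.add_apply] at hy hz ⊢; rw [hy, hz]
        | tmul c d => simp [hΦ]
  · -- coact_counit
    intro x
    induction x using TensorProduct.induction_on with
    | zero => simp
    | add y z hy hz => simp [map_add, hy, hz]
    | tmul m n =>
      obtain ⟨Sm, hm⟩ := TensorProduct.exists_finset (R := k) (YM.coact m)
      obtain ⟨Sn, hn⟩ := TensorProduct.exists_finset (R := k) (YN.coact n)
      rw [congr_symm_tmul, ← YM.coact_counit m, ← YN.coact_counit n, dCoact_tmul]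
      conv_lhs => rw [hm, hn]
      conv_rhs => rw [hm, hn]
      simp only [map_sum, sum_tmul, tmul_sum, map_sum, Finset.sum_sigma']
      refine Finset.sum_congr rfl fun pq _ => ?_
      obtain ⟨q, p⟩ := pq
      simp only [Xi_tmul, map_tmul, rid_tmul, A.counit_mul, TensorProduct.smul_tmul_smul,
        LinearMap.id_coe, id_eq]
  · -- coact_nu
    intro x
    induction x using TensorProduct.induction_on with
    | zero => simp
    | add y z hy hz => simp [map_add, hy, hz]
    | tmul m n =>
      rw [congr_tmul, dCoact_tmul, dCoact_tmul, YM.coact_nu, YN.coact_nu]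
      obtain ⟨Sm, hm⟩ := TensorProduct.exists_finset (R := k) (YM.coact m)
      obtain ⟨Sn, hn⟩ := TensorProduct.exists_finset (R := k) (YN.coact n)
      conv_lhs => rw [hm, hn]
      conv_rhs => rw [hm, hn]
      simp only [map_sum, sum_tmul, tmul_sum, map_sum, Finset.sum_sigma']
      refine Finset.sum_congr rfl fun pq _ => ?_
      obtain ⟨q, p⟩ := pq
      simp [A.alpha_mul]
  · -- yd
    intro x h
    induction x using TensorProduct.induction_on with
    | zero => simp
    | add y z hy hz =>
      simp only [map_add, tmul_add, LinearMap.comp_add, LinearMap.add_comp,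
        TensorProduct.map_add_right, LinearMap.add_apply, map_add, hy, hz]
    | tmul m n =>
      obtain ⟨Sm, hm⟩ := TensorProduct.exists_finset (R := k) (YM.coact m)
      obtain ⟨Sn, hn⟩ := TensorProduct.exists_finset (R := k) (YN.coact n)
      obtain ⟨Sh, hh⟩ := TensorProduct.exists_finset (R := k) (A.comul h)
      -- step 0: rewrite both sides
      have key1 : ∀ (p1 : M) (p2 : H) (q1 : N) (q2 : H) (w : H ⊗[k] H),
          tmul2 ((dAct A YM.act YN.act).compl₂ A.α.symm.toLinearMap)
              (A.mul.compl₂ A.α.symm.toLinearMap) ((p1 ⊗ₜ[k] q1) ⊗ₜ[k] A.mul p2 q2) w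
            = TensorProduct.map
                (TensorProduct.map (YM.act p1 ∘ₗ A.α.symm.toLinearMap)
                  (YN.act q1 ∘ₗ A.α.symm.toLinearMap)) (A.mul (A.mul p2 q2))
                (TensorProduct.map A.comul A.α.symm.toLinearMap w) := by
        intro p1 p2 q1 q2 w
        induction w using TensorProduct.induction_on with
        | zero => simp
        | add y z hy hz =>
          simp only [map_add, LinearMap.map_add, LinearMap.add_apply] at hy hz ⊢
          rw [hy, hz]
        | tmul a b =>
          simp only [tmul2_tmul, map_tmul, LinearMap.compl₂_apply, LinearMap.coe_comp,
            Function.comp_apply, LinearEquiv.coe_coe]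
          congr 1
          rw [dAct_apply, comul_alpha_inv]
          generalize A.comul a = w2
          induction w2 using TensorProduct.induction_on with
          | zero => simp
          | add y z hy hz =>
            simp only [map_add, LinearMap.map_add, LinearMap.add_apply] at hy hz ⊢
            rw [hy, hz]
          | tmul c d => simp
      have hT : TensorProduct.map A.comul A.α.symm.toLinearMap (A.comul h)
          = (TensorProduct.assoc k H H H).symm
              (TensorProduct.map A.α.symm.toLinearMap A.comul (A.comul h)) := by
        rw [← A.hom_coassoc h, LinearEquiv.symm_apply_apply]
      have hcomp_id : A.α.toLinearMap ∘ₗ A.α.symm.toLinearMap = LinearMap.id := by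
        ext x; simp
      have hE : TensorProduct.map (LinearMap.id : H →ₗ[k] H) A.comul (A.comul h)
          = TensorProduct.map A.α.toLinearMap LinearMap.id
              ((TensorProduct.assoc k H H H)
                (TensorProduct.map A.comul A.α.symm.toLinearMap (A.comul h))) := by
        rw [A.hom_coassoc h,
          show TensorProduct.map A.α.toLinearMap LinearMap.id
              (TensorProduct.map A.α.symm.toLinearMap A.comul (A.comul h))
            = (TensorProduct.map A.α.toLinearMap LinearMap.id ∘ₗ
                TensorProduct.map A.α.symm.toLinearMap A.comul) (A.comul h) from rfl,
          ← TensorProduct.map_comp, hcomp_id, LinearMap.id_comp]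
      have hE2 : ∀ (f : (M ⊗[k] N) →ₗ[k] (M ⊗[k] N) ⊗[k] H),
          TensorProduct.map (LinearMap.id : H →ₗ[k] H)
              (f ∘ₗ TensorProduct.map (YM.act m) (YN.act n) ∘ₗ A.comul) (A.comul h)
            = TensorProduct.map LinearMap.id (f ∘ₗ TensorProduct.map (YM.act m) (YN.act n))
                (TensorProduct.map A.α.toLinearMap LinearMap.id
                  ((TensorProduct.assoc k H H H)
                    (TensorProduct.map A.comul A.α.symm.toLinearMap (A.comul h)))) := by
        intro f
        rw [← LinearMap.comp_assoc, map_id_comp, LinearMap.comp_apply, hE]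
      have hact : (dAct A YM.act YN.act) (m ⊗ₜ[k] n)
          = TensorProduct.map (YM.act m) (YN.act n) ∘ₗ A.comul := by
        refine LinearMap.ext fun a => ?_
        rw [LinearMap.comp_apply, dAct_apply]
        generalize A.comul a = w
        induction w using TensorProduct.induction_on with
        | zero => simp
        | add y z hy hz =>
          simp only [map_add, LinearMap.map_add, LinearMap.add_apply] at hy hz ⊢
          rw [hy, hz]
        | tmul a b => simp
      conv_rhs => rw [hact, hE2 (dCoact A YM.coact YN.coact)]
      conv_lhs => rw [dCoact_tmul, hm, hn]
      simp only [sum_tmul, tmul_sum, map_sum, Xi_tmul, LinearMap.sum_apply]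
      simp only [key1]
      rw [hT, hh]
      simp only [map_sum, map_tmul, LinearMap.sum_apply]
      simp only [map_tmul, LinearMap.id_coe, id_eq, LinearEquiv.coe_coe,
        LinearEquiv.apply_symm_apply]
      -- local abbreviations for the big intermediate maps
      set KT : M → H → (H ⊗[k] (H ⊗[k] H)) →ₗ[k] ((M ⊗[k] N) ⊗[k] H) := fun p1 p2 =>
        (TensorProduct.map
            (TensorProduct.map (YM.act p1 ∘ₗ A.α.symm.toLinearMap ∘ₗ A.α.symm.toLinearMap)
              (LinearMap.id : N →ₗ[k] N)) (LinearMap.id : H →ₗ[k] H)) ∘ₗ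
          (TensorProduct.assoc k H N H).symm.toLinearMap ∘ₗ
          (TensorProduct.map LinearMap.id
            (TensorProduct.map LinearMap.id
              (A.α.symm.toLinearMap ∘ₗ TensorProduct.lift A.mul ∘ₗ
                TensorProduct.map (A.mul (A.α p2)) A.α.toLinearMap))) ∘ₗ
          (TensorProduct.map LinearMap.id (TensorProduct.leftComm k H N H).toLinearMap) ∘ₗ
          (TensorProduct.map LinearMap.id
            (TensorProduct.map LinearMap.id (YN.coact ∘ₗ YN.act n))) with hKT
      set WT : H → (M ⊗[k] H) →ₗ[k] ((M ⊗[k] N) ⊗[k] H) := fun c =>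
        (TensorProduct.map LinearMap.id
            (A.α.symm.toLinearMap ∘ₗ TensorProduct.lift A.mul ∘ₗ
              TensorProduct.map A.α.toLinearMap A.α.toLinearMap)) ∘ₗ
          (TensorProduct.tensorTensorTensorComm k M H N H).toLinearMap ∘ₗ
          ((TensorProduct.mk k (M ⊗[k] H) (N ⊗[k] H)).flip
            (YN.coact (YN.act n (A.α.symm c)))) with hWT
      have key2 : ∀ (p1 : M) (p2 r1 r2 : H),
          (∑ q ∈ Sn,
            (TensorProduct.map
              (TensorProduct.map (YM.act p1 ∘ₗ A.α.symm.toLinearMap)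
                (YN.act q.1 ∘ₗ A.α.symm.toLinearMap)) (A.mul (A.mul p2 q.2)))
              ((TensorProduct.assoc k H H H).symm (A.α.symm r1 ⊗ₜ[k] A.comul r2)))
          = (TensorProduct.map (TensorProduct.mk k M N (YM.act p1 (A.α.symm (A.α.symm r1))))
              (A.mul (A.α p2)))
              (tmul2 (YN.act.compl₂ A.α.symm.toLinearMap) (A.mul.compl₂ A.α.symm.toLinearMap)
                (YN.coact n) (A.comul r2)) := by
        intro p1 p2 r1 r2
        conv_rhs => rw [hn]
        simp only [map_sum, LinearMap.sum_apply]
        refine Finset.sum_congr rfl fun q _ => ?_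
        generalize A.comul r2 = w
        induction w using TensorProduct.induction_on with
        | zero => simp
        | add y z hy hz =>
          simp only [map_add, tmul_add, LinearMap.map_add, LinearMap.add_apply] at hy hz ⊢
          rw [hy, hz]
        | tmul u v =>
          simp only [map_tmul, assoc_symm_tmul, tmul2_tmul, LinearMap.compl₂_apply,
            LinearMap.coe_comp, Function.comp_apply, LinearEquiv.coe_coe, mk_apply]
          congr 1
          rw [A.hom_assoc, A.α.apply_symm_apply]
      have key3 : ∀ (p1 : M) (p2 r1 r2 : H),
          (TensorProduct.map (TensorProduct.mk k M N (YM.act p1 (A.α.symm (A.α.symm r1))))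
              (A.mul (A.α p2)))
              ((TensorProduct.map LinearMap.id (A.α.symm.toLinearMap ∘ₗ TensorProduct.lift A.mul) ∘ₗ
                  (TensorProduct.leftComm k H N H).toLinearMap)
                ((TensorProduct.map LinearMap.id (YN.coact ∘ₗ YN.act n)) (A.comul r2)))
          = KT p1 p2 (r1 ⊗ₜ[k] A.comul r2) := by
        intro p1 p2 r1 r2
        generalize A.comul r2 = w
        induction w using TensorProduct.induction_on with
        | zero => simp
        | add y z hy hz =>
          simp only [map_add, tmul_add, LinearMap.map_add, LinearMap.add_apply] at hy hz ⊢
          rw [hy, hz]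
        | tmul u v =>
          simp only [hKT, map_tmul, LinearMap.coe_comp, Function.comp_apply,
            LinearEquiv.coe_coe, LinearMap.id_coe, id_eq]
          generalize YN.coact (YN.act n v) = y
          induction y using TensorProduct.induction_on with
          | zero => simp
          | add y z hy hz =>
            simp only [map_add, tmul_add, LinearMap.map_add, LinearMap.add_apply] at hy hz ⊢
            rw [hy, hz]
          | tmul y0 y1 =>
            simp only [leftComm_tmul, map_tmul, assoc_symm_tmul, lift.tmul, mk_apply,
              LinearMap.coe_comp, Function.comp_apply, LinearEquiv.coe_coe,
              LinearMap.id_coe, id_eq]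
            congr 1
            rw [← A.hom_assoc]
            conv_rhs => rw [alpha_inv_mul A, A.α.symm_apply_apply]
      have key4 : ∀ (p1 : M) (p2 c : H) (w : H ⊗[k] H),
          KT p1 p2 ((TensorProduct.map A.α.toLinearMap LinearMap.id)
              ((TensorProduct.assoc k H H H) (w ⊗ₜ[k] A.α.symm c)))
          = WT c (tmul2 (YM.act.compl₂ A.α.symm.toLinearMap) (A.mul.compl₂ A.α.symm.toLinearMap)
              (p1 ⊗ₜ[k] p2) w) := by
        intro p1 p2 c w
        induction w using TensorProduct.induction_on with
        | zero => simp
        | add y z hy hz =>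
          simp only [map_add, tmul_add, add_tmul, LinearMap.map_add, LinearMap.add_apply]
            at hy hz ⊢
          rw [hy, hz]
        | tmul s1 s2 =>
          simp only [hKT, hWT, assoc_tmul, map_tmul, LinearMap.coe_comp, Function.comp_apply,
            LinearEquiv.coe_coe, LinearMap.id_coe, id_eq, tmul2_tmul, LinearMap.compl₂_apply,
            LinearMap.flip_apply, mk_apply]
          generalize YN.coact (YN.act n (A.α.symm c)) = y
          induction y using TensorProduct.induction_on with
          | zero => simp
          | add y z hy hz =>
            simp only [map_add, tmul_add, LinearMap.map_add, LinearMap.add_apply] at hy hz ⊢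
            rw [hy, hz]
          | tmul y0 y1 =>
            simp only [leftComm_tmul, map_tmul, assoc_symm_tmul, lift.tmul, mk_apply,
              tensorTensorTensorComm_tmul, LinearMap.coe_comp, Function.comp_apply,
              LinearEquiv.coe_coe, LinearMap.id_coe, id_eq, LinearEquiv.symm_apply_apply]
            congr 2
            rw [A.alpha_mul, A.α.apply_symm_apply]
      have key5 : ∀ (c : H) (w : H ⊗[k] H),
          WT c ((TensorProduct.map LinearMap.id
                (A.α.symm.toLinearMap ∘ₗ TensorProduct.lift A.mul) ∘ₗ
                (TensorProduct.leftComm k H M H).toLinearMap)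
              ((TensorProduct.map LinearMap.id (YM.coact ∘ₗ YM.act m)) w))
          = (TensorProduct.map LinearMap.id
                (A.α.symm.toLinearMap ∘ₗ TensorProduct.lift A.mul) ∘ₗ
                (TensorProduct.leftComm k H (M ⊗[k] N) H).toLinearMap)
              ((TensorProduct.map LinearMap.id
                  (dCoact A YM.coact YN.coact ∘ₗ TensorProduct.map (YM.act m) (YN.act n)))
                ((TensorProduct.map A.α.toLinearMap LinearMap.id)
                  ((TensorProduct.assoc k H H H) (w ⊗ₜ[k] A.α.symm c)))) := by
        intro c w
        induction w using TensorProduct.induction_on with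
        | zero => simp
        | add y z hy hz =>
          simp only [map_add, tmul_add, add_tmul, LinearMap.map_add, LinearMap.add_apply]
            at hy hz ⊢
          rw [hy, hz]
        | tmul s1 s2 =>
          simp only [hWT, assoc_tmul, map_tmul, LinearMap.coe_comp, Function.comp_apply,
            LinearEquiv.coe_coe, LinearMap.id_coe, id_eq, dCoact_tmul]
          generalize YM.coact (YM.act m s2) = x
          generalize YN.coact (YN.act n (A.α.symm c)) = y
          induction x using TensorProduct.induction_on with
          | zero => simp
          | add y' z' hy hz =>
            simp only [map_add, tmul_add, add_tmul, LinearMap.map_add, LinearMap.add_apply]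
              at hy hz ⊢
            rw [hy, hz]
          | tmul x0 x1 =>
            induction y using TensorProduct.induction_on with
            | zero => simp
            | add y' z' hy hz =>
              simp only [map_add, tmul_add, LinearMap.map_add, LinearMap.add_apply] at hy hz ⊢
              rw [hy, hz]
            | tmul y0 y1 =>
              simp only [leftComm_tmul, map_tmul, Xi_tmul, lift.tmul, mk_apply,
                tensorTensorTensorComm_tmul, LinearMap.flip_apply, LinearMap.coe_comp,
                Function.comp_apply, LinearEquiv.coe_coe, LinearMap.id_coe, id_eq,
                LinearEquiv.apply_symm_apply]
              congr 1
              rw [A.hom_assoc]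
      -- reorder the sums and apply the chain of keys
      rw [Finset.sum_comm]
      trans (∑ p ∈ Sm, ∑ r ∈ Sh, ∑ q ∈ Sn,
        (TensorProduct.map
          (TensorProduct.map (YM.act p.1 ∘ₗ A.α.symm.toLinearMap)
            (YN.act q.1 ∘ₗ A.α.symm.toLinearMap)) (A.mul (A.mul p.2 q.2)))
          ((TensorProduct.assoc k H H H).symm (A.α.symm r.1 ⊗ₜ[k] A.comul r.2)))
      · exact Finset.sum_congr rfl fun p _ => Finset.sum_comm
      simp only [key2, YN.yd, key3]
      have e1 : TensorProduct.map (LinearMap.id : H →ₗ[k] H) A.comul (A.comul h)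
          = ∑ r ∈ Sh, r.1 ⊗ₜ[k] A.comul r.2 := by
        rw [hh, map_sum]
        simp only [map_tmul, LinearMap.id_coe, id_eq]
      have e2 : TensorProduct.map A.α.toLinearMap LinearMap.id
            ((TensorProduct.assoc k H H H)
              (TensorProduct.map A.comul A.α.symm.toLinearMap (A.comul h)))
          = ∑ r ∈ Sh, TensorProduct.map A.α.toLinearMap LinearMap.id
              ((TensorProduct.assoc k H H H) (A.comul r.1 ⊗ₜ[k] A.α.symm r.2)) := by
        rw [hh]
        simp only [map_sum, map_tmul, LinearEquiv.coe_coe]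
      have hswap : (∑ r ∈ Sh, r.1 ⊗ₜ[k] A.comul r.2)
          = ∑ r ∈ Sh, TensorProduct.map A.α.toLinearMap LinearMap.id
              ((TensorProduct.assoc k H H H) (A.comul r.1 ⊗ₜ[k] A.α.symm r.2)) :=
        e1.symm.trans (hE.trans e2)
      trans (∑ p ∈ Sm, ∑ r ∈ Sh, KT p.1 p.2
          (TensorProduct.map A.α.toLinearMap LinearMap.id
            ((TensorProduct.assoc k H H H) (A.comul r.1 ⊗ₜ[k] A.α.symm r.2))))
      · exact Finset.sum_congr rfl fun p _ => by rw [← map_sum, hswap, map_sum]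
      simp only [key4]
      conv_lhs => rw [Finset.sum_comm]
      trans (∑ r ∈ Sh, WT r.2
          (tmul2 (YM.act.compl₂ A.α.symm.toLinearMap) (A.mul.compl₂ A.α.symm.toLinearMap)
            (YM.coact m) (A.comul r.1)))
      · refine Finset.sum_congr rfl fun r _ => ?_
        rw [← map_sum, ← LinearMap.sum_apply, ← map_sum, ← hm]
      simp only [YM.yd, key5]
      rw [← map_sum, ← map_sum, ← e2, ← hE, e1, map_sum, map_sum]
      simp only [map_tmul, LinearMap.id_coe, id_eq]
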